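/- A Fredholm matrix A ∈ B(K) has index 0 if and only if A = V + T for some invertible V ∈ B(K) and some T ∈ M_∞(K). -/

import Mathlib

/-!
If `A = V + T` with `V` invertible and `T` of finite rank, then `A = V (1 + s)` with `s = V⁻¹T` of
finite rank; the kernel of `1 + s` lies in `range s`, and its cokernel is the cokernel of the
restriction of `1 + s` to the finite-dimensional space `range s`, so rank–nullity there gives
index `0`.

Conversely, let `A` be Fredholm of index `0`, with `B` inverting it modulo `M_∞(K)`. As `ker A` is
finite-dimensional it misses some tail `V_m`, so it has a complement `W ⊇ V_m`. Sending `ker A`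
isomorphically onto a complement of `range A` and `W` to `0` gives a finite-rank `F` that kills
`V_m` (hence is row and column finite) with `A + F` bijective. The inverse is again row and column
finite: `(A + F)⁻¹ = B + (A + F)⁻¹ (1 - (A + F) B)`, and the last factor kills a tail.
-/

open LinearMap

set_option synthInstance.maxHeartbeats 1000000
set_option maxHeartbeats 2000000

/-- The submodule `V_n` of finitely supported sequences vanishing below `n`. -/
def tailSubmodule (K : Type*) [Field K] (n : ℕ) : Submodule K (ℕ →₀ K) where
  carrier := {v | ∀ i < n, v i = 0}
  add_mem' := by intro a b ha hb i hi; simp [Finsupp.add_apply, ha i hi, hb i hi]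
  zero_mem' := by intro i hi; simp
  smul_mem' := by intro c a ha i hi; simp [Finsupp.smul_apply, ha i hi]

/-- The algebra of "row and column finite" endomorphisms of `ℕ →₀ K`. -/
def RCFM (K : Type*) [Field K] : Subalgebra K (Module.End K (ℕ →₀ K)) where
  carrier := {f | ∀ n, ∃ m, ∀ v ∈ tailSubmodule K m, f v ∈ tailSubmodule K n}
  mul_mem' := by
    intro f g hf hg n
    obtain ⟨m₁, h₁⟩ := hf n
    obtain ⟨m₂, h₂⟩ := hg m₁
    exact ⟨m₂, fun v hv => h₁ _ (h₂ v hv)⟩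
  add_mem' := by
    intro f g hf hg n
    obtain ⟨m₁, h₁⟩ := hf n
    obtain ⟨m₂, h₂⟩ := hg n
    refine ⟨max m₁ m₂, fun v hv => ?_⟩
    have hv₁ : v ∈ tailSubmodule K m₁ := fun i hi => hv i (lt_of_lt_of_le hi (le_max_left _ _))
    have hv₂ : v ∈ tailSubmodule K m₂ := fun i hi => hv i (lt_of_lt_of_le hi (le_max_right _ _))
    exact (tailSubmodule K n).add_mem (h₁ v hv₁) (h₂ v hv₂)
  algebraMap_mem' := by
    intro r n
    refine ⟨n, fun v hv => ?_⟩
    have : (algebraMap K (Module.End K (ℕ →₀ K)) r) v = r • v := rfl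
    rw [this]
    exact (tailSubmodule K n).smul_mem r hv

/-- Finite rank endomorphisms, playing the role of `M_∞(K)`. -/
def FinRank {K : Type*} [Field K] (f : Module.End K (ℕ →₀ K)) : Prop :=
  FiniteDimensional K (LinearMap.range f)

variable {K : Type*} [Field K]

theorem finrank_zero : FinRank (0 : Module.End K (ℕ →₀ K)) := by
  unfold FinRank
  rw [LinearMap.range_zero]
  infer_instance

theorem finrank_add {f g : Module.End K (ℕ →₀ K)} (hf : FinRank f) (hg : FinRank g) :
    FinRank (f + g) := by
  unfold FinRank at *
  haveI := hf; haveI := hg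
  have hle : LinearMap.range (f + g) ≤ LinearMap.range f ⊔ LinearMap.range g := by
    rintro x ⟨v, rfl⟩
    exact Submodule.add_mem_sup (LinearMap.mem_range_self f v) (LinearMap.mem_range_self g v)
  exact Submodule.finiteDimensional_of_le hle

theorem finrank_neg {f : Module.End K (ℕ →₀ K)} (hf : FinRank f) : FinRank (-f) := by
  unfold FinRank at *
  rwa [LinearMap.range_neg]

theorem finrank_mul_left (f : Module.End K (ℕ →₀ K)) {g : Module.End K (ℕ →₀ K)}
    (hg : FinRank g) : FinRank (f * g) := by
  unfold FinRank at *
  haveI := hg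
  rw [show f * g = f.comp g from rfl, LinearMap.range_comp]
  exact Module.Finite.map _ f

theorem finrank_mul_right {f : Module.End K (ℕ →₀ K)} (g : Module.End K (ℕ →₀ K))
    (hf : FinRank f) : FinRank (f * g) := by
  unfold FinRank at *
  haveI := hf
  have hle : LinearMap.range (f * g) ≤ LinearMap.range f := by
    rintro x ⟨v, rfl⟩; exact LinearMap.mem_range_self f (g v)
  exact Submodule.finiteDimensional_of_le hle


noncomputable instance instRingRCFM (K : Type*) [Field K] : Ring (RCFM K) :=
  @Subalgebra.toRing K (Module.End K (ℕ →₀ K)) _ _ _ (RCFM K)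

/-- `M_∞(K)` as a two-sided ideal of `RCFM K`. -/
noncomputable def Minf (K : Type*) [Field K] : TwoSidedIdeal (RCFM K) :=
  TwoSidedIdeal.mk' {f : RCFM K | FinRank (f : Module.End K (ℕ →₀ K))}
    finrank_zero
    (fun hx hy => finrank_add hx hy)
    (fun hx => finrank_neg hx)
    (fun hy => finrank_mul_left _ hy)
    (fun hx => finrank_mul_right _ hx)


/-- The quotient algebra `Q(K) = RCFM(K)/M_∞(K)`. -/
abbrev QK (K : Type*) [Field K] := (Minf K).ringCon.Quotient

/-- The quotient map `π : RCFM(K) → Q(K)`. -/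
noncomputable abbrev quotMap (K : Type*) [Field K] : RCFM K →+* QK K := (Minf K).ringCon.mk'

/-- The index of an endomorphism. -/
noncomputable def ind (f : Module.End K (ℕ →₀ K)) : ℤ :=
  (Module.finrank K (LinearMap.ker f) : ℤ) -
    (Module.finrank K ((ℕ →₀ K) ⧸ LinearMap.range f) : ℤ)

open Function Module

theorem LinearMap.finrank_ker_eq_finrank_quotient_range {V : Type*} [AddCommGroup V] [Module K V]
    [FiniteDimensional K V] (u : Module.End K V) :
    finrank K (ker u) = finrank K (V ⧸ range u) := by
  have := finrank_range_add_finrank_ker u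
  have := Submodule.finrank_quotient_add_finrank (range u)
  omega

section OneAddFiniteRank

variable {M : Type*} [AddCommGroup M] [Module K M] (s : Module.End K M)

theorem ker_one_add_le_range : ker (1 + s) ≤ range s := fun x hx =>
  ⟨-x, by rw [map_neg, neg_eq_iff_add_eq_zero, add_comm]; exact hx⟩

theorem one_add_apply_mem_range : ∀ x ∈ range s, (1 + s) x ∈ range s := fun x hx =>
  (range s).add_mem hx (mem_range_self s x)

theorem comap_range_one_add :
    (range (1 + s)).comap (range s).subtype =
      range ((1 + s).restrict (one_add_apply_mem_range s)) := by
  ext ⟨x, hx⟩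
  refine ⟨fun ⟨z, hz⟩ => ⟨⟨z, ?_⟩, Subtype.ext hz⟩, fun ⟨z, hz⟩ => ⟨z, congrArg Subtype.val hz⟩⟩
  have hz' : z + s z = x := hz
  exact eq_sub_of_add_eq hz' ▸ (range s).sub_mem hx (mem_range_self s z)

theorem surjective_mkQ_comp_subtype_range :
    Surjective ((range (1 + s)).mkQ ∘ₗ (range s).subtype) := by
  rintro ⟨x⟩
  refine ⟨⟨-s x, (range s).neg_mem (mem_range_self s x)⟩, ?_⟩
  exact (Submodule.Quotient.eq _).2 ⟨-x, by
    simp only [map_neg, LinearMap.add_apply, Module.End.one_apply, Submodule.subtype_apply]; abel⟩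

noncomputable def quotientRangeRestrictOneAddEquiv :
    (range s ⧸ range ((1 + s).restrict (one_add_apply_mem_range s))) ≃ₗ[K] M ⧸ range (1 + s) :=
  (Submodule.quotEquivOfEq _ _ (by rw [ker_comp, Submodule.ker_mkQ, comap_range_one_add])).trans
    (((range (1 + s)).mkQ ∘ₗ (range s).subtype).quotKerEquivOfSurjective
      (surjective_mkQ_comp_subtype_range s))

variable [FiniteDimensional K (range s)]

theorem finiteDimensional_quotient_range_one_add : FiniteDimensional K (M ⧸ range (1 + s)) :=
  Module.Finite.equiv (quotientRangeRestrictOneAddEquiv s)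

theorem finrank_ker_one_add_eq_finrank_quotient_range :
    finrank K (ker (1 + s)) = finrank K (M ⧸ range (1 + s)) := by
  set u := (1 + s).restrict (one_add_apply_mem_range s)
  have hker : finrank K (ker u) = finrank K (ker (1 + s)) := by
    rw [ker_restrict]; exact (Submodule.comapSubtypeEquivOfLe (ker_one_add_le_range s)).finrank_eq
  rw [← hker, ← (quotientRangeRestrictOneAddEquiv s).finrank_eq]
  exact LinearMap.finrank_ker_eq_finrank_quotient_range u

end OneAddFiniteRank

section Fredholm

variable {M : Type*} [AddCommGroup M] [Module K M]

theorem ker_le_range_one_sub_mul (a b : Module.End K M) : ker a ≤ range (1 - b * a) :=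
  fun x hx => ⟨x, by simp [show a x = 0 from hx]⟩

theorem finiteDimensional_quotient_range_of_one_sub_mul (a b : Module.End K M)
    [FiniteDimensional K (range (1 - a * b))] : FiniteDimensional K (M ⧸ range a) := by
  have : FiniteDimensional K (range (-(1 - a * b))) := by rwa [range_neg]
  have : FiniteDimensional K (M ⧸ range (1 + -(1 - a * b))) :=
    finiteDimensional_quotient_range_one_add _
  have h : range (1 + -(1 - a * b)) ≤ range a := by
    rw [neg_sub, add_sub_cancel]; exact range_comp_le_range b a
  exact Module.Finite.of_surjective _ (Submodule.factor_surjective h)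

end Fredholm

theorem bijective_add_of_isCompl {R M : Type*} [Ring R] [AddCommGroup M] [Module R M]
    {a : Module.End R M} {W C : Submodule R M} (hW : IsCompl (ker a) W) (hC : IsCompl (range a) C)
    (φ : ker a ≃ₗ[R] C) :
    Bijective (a + C.subtype ∘ₗ φ.toLinearMap ∘ₗ (ker a).projectionOnto W hW) := by
  set f := C.subtype ∘ₗ φ.toLinearMap ∘ₗ (ker a).projectionOnto W hW
  have hf_ker {x : M} (hx : x ∈ ker a) : f x = φ ⟨x, hx⟩ := by
    simp [f, Submodule.projectionOnto_apply_of_mem_left hW hx]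
  have hf_W {x : M} (hx : x ∈ W) : f x = 0 := by
    simp [f, (Submodule.projectionOnto_apply_eq_zero_iff hW).2 hx]
  constructor
  · rw [← ker_eq_bot, eq_bot_iff]
    intro x hx
    have hax : a x = -f x := eq_neg_of_add_eq_zero_left hx
    have hxa : x ∈ ker a := by
      have : a x ∈ range a ⊓ C := ⟨mem_range_self a x, hax ▸ C.neg_mem (φ _).2⟩
      rwa [hC.inf_eq_bot] at this
    have hfx : f x = 0 := by rw [← neg_eq_zero, ← hax]; exact hxa
    have : φ ⟨x, hxa⟩ = 0 := Subtype.ext ((hf_ker hxa).symm.trans hfx)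
    simpa using congrArg Subtype.val (φ.map_eq_zero_iff.1 this)
  · rw [← range_eq_top, eq_top_iff, ← hC.sup_eq_top, sup_le_iff]
    constructor
    · have : range a = W.map a := by
        rw [range_eq_map, ← hW.sup_eq_top, Submodule.map_sup, le_ker_iff_map.1 le_rfl, bot_sup_eq]
      rw [this]
      rintro _ ⟨w, hw, rfl⟩
      exact ⟨w, by simp [hf_W hw]⟩
    · intro c hc
      obtain ⟨⟨k, hk⟩, hkc⟩ := φ.surjective ⟨c, hc⟩
      exact ⟨k, by simp [show a k = 0 from hk, hf_ker hk, hkc]⟩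

theorem exists_finiteDimensional_range_bijective_add {M : Type*} [AddCommGroup M] [Module K M]
    {a : Module.End K M} {W : Submodule K M} (hW : IsCompl (ker a) W)
    [FiniteDimensional K (ker a)] [FiniteDimensional K (M ⧸ range a)]
    (h : finrank K (ker a) = finrank K (M ⧸ range a)) :
    ∃ f : Module.End K M, FiniteDimensional K (range f) ∧ W ≤ ker f ∧ Bijective (a + f) := by
  obtain ⟨C, hC⟩ := Submodule.exists_isCompl (range a)
  let eC := Submodule.quotientEquivOfIsCompl _ _ hC
  have : FiniteDimensional K C := Module.Finite.equiv eC
  let φ := LinearEquiv.ofFinrankEq (ker a) C (h.trans eC.finrank_eq)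
  refine ⟨_, ?_, ?_, bijective_add_of_isCompl hW hC φ⟩
  · exact Submodule.finiteDimensional_of_le ((range_comp_le_range _ _).trans C.range_subtype.le)
  · intro x hx
    simp [(Submodule.projectionOnto_apply_eq_zero_iff hW).2 hx]

theorem TwoSidedIdeal.mk'_eq_mk'_iff_sub_mem {R : Type*} [Ring R] (I : TwoSidedIdeal R) {x y : R} :
    I.ringCon.mk' x = I.ringCon.mk' y ↔ x - y ∈ I :=
  (RingCon.eq I.ringCon).trans (I.rel_iff x y)

theorem TwoSidedIdeal.exists_one_sub_mul_mem_of_isUnit {R : Type*} [Ring R] {I : TwoSidedIdeal R}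
    {a : R} (h : IsUnit (I.ringCon.mk' a)) : ∃ b, 1 - b * a ∈ I ∧ 1 - a * b ∈ I := by
  obtain ⟨u, hu⟩ := h
  obtain ⟨b, hb⟩ := RingCon.mk'_surjective (c := I.ringCon) ↑u⁻¹
  refine ⟨b, (I.mk'_eq_mk'_iff_sub_mem).1 ?_, (I.mk'_eq_mk'_iff_sub_mem).1 ?_⟩
  · rw [map_mul, map_one, hb, ← hu, u.inv_mul]
  · rw [map_mul, map_one, hb, ← hu, u.mul_inv]

theorem Submodule.FG.exists_le_supported {R ι : Type*} [Semiring R] {p : Submodule R (ι →₀ R)}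
    (hp : p.FG) : ∃ s : Finset ι, p ≤ Finsupp.supported R R (s : Set ι) := by
  classical
  obtain ⟨S, rfl⟩ := hp
  refine ⟨S.biUnion Finsupp.support, Submodule.span_le.2 fun v hv => ?_⟩
  exact (Finsupp.mem_supported R v).2 fun i hi => Finset.mem_biUnion.2 ⟨v, hv, hi⟩

theorem disjoint_supported_range_tailSubmodule (m : ℕ) :
    Disjoint (Finsupp.supported K K (Finset.range m : Set ℕ)) (tailSubmodule K m) := by
  refine Submodule.disjoint_def.2 fun v hv hv' => Finsupp.ext fun i => ?_
  by_cases hi : i < m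
  · exact hv' i hi
  · exact Finsupp.notMem_support_iff.1 fun h => hi (Finset.mem_range.1 (hv h))

theorem exists_disjoint_tailSubmodule (p : Submodule K (ℕ →₀ K)) [FiniteDimensional K p] :
    ∃ m, Disjoint p (tailSubmodule K m) := by
  obtain ⟨s, hs⟩ := (Submodule.fg_iff_finiteDimensional p).2 ‹_› |>.exists_le_supported
  obtain ⟨m, hm⟩ := s.exists_nat_subset_range
  exact ⟨m, (disjoint_supported_range_tailSubmodule m).mono_left
    (hs.trans (Finsupp.supported_mono (Finset.coe_subset.2 hm)))⟩

theorem mem_RCFM_of_tailSubmodule_le_ker {f : Module.End K (ℕ →₀ K)} {m : ℕ}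
    (h : tailSubmodule K m ≤ ker f) : f ∈ RCFM K :=
  fun n => ⟨m, fun v hv => (show f v = 0 from h hv) ▸ (tailSubmodule K n).zero_mem⟩

theorem exists_tailSubmodule_le_ker_of_finRank {f : Module.End K (ℕ →₀ K)} (hf : f ∈ RCFM K)
    (hfin : FinRank f) : ∃ m, tailSubmodule K m ≤ ker f := by
  have : FiniteDimensional K (range f) := hfin
  obtain ⟨n, hn⟩ := exists_disjoint_tailSubmodule (range f)
  obtain ⟨m, hm⟩ := hf n
  exact ⟨m, fun v hv => Submodule.disjoint_def.1 hn _ (mem_range_self f v) (hm v hv)⟩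

theorem mem_Minf {x : RCFM K} : x ∈ Minf K ↔ FinRank (x : Module.End K (ℕ →₀ K)) :=
  TwoSidedIdeal.mem_mk' ..

theorem isUnit_of_bijective_of_isUnit_quotMap {v : RCFM K}
    (hv : Bijective (v : Module.End K (ℕ →₀ K))) (hπ : IsUnit (quotMap K v)) : IsUnit v := by
  obtain ⟨b, -, hvb⟩ := TwoSidedIdeal.exists_one_sub_mul_mem_of_isUnit hπ
  obtain ⟨m, hm⟩ := exists_tailSubmodule_le_ker_of_finRank (1 - v * b).2 (mem_Minf.1 hvb)
  obtain ⟨u, hu⟩ := (Module.End.isUnit_iff _).2 hv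
  set w : Module.End K (ℕ →₀ K) := ↑u⁻¹
  have hvw : (v : Module.End K (ℕ →₀ K)) * w = 1 := hu ▸ u.mul_inv
  have hwv : w * (v : Module.End K (ℕ →₀ K)) = 1 := hu ▸ u.inv_mul
  have hw : w = b + w * ↑(1 - v * b) := by
    rw [show ((1 - v * b : RCFM K) : Module.End K (ℕ →₀ K)) = 1 - v * b from rfl,
      mul_sub w 1 (↑v * ↑b), ← mul_assoc, hwv, mul_one, one_mul, add_sub_cancel]
  have hw_mem : w ∈ RCFM K := by
    rw [hw]
    exact (RCFM K).add_mem b.2 (mem_RCFM_of_tailSubmodule_le_ker (hm.trans (ker_le_ker_comp _ _)))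
  exact ⟨⟨v, ⟨w, hw_mem⟩, Subtype.ext hvw, Subtype.ext hwv⟩, rfl⟩

theorem ind_eq_zero_iff {f : Module.End K (ℕ →₀ K)} :
    ind f = 0 ↔ finrank K (ker f) = finrank K ((ℕ →₀ K) ⧸ range f) :=
  sub_eq_zero.trans Nat.cast_inj

theorem ind_mul_of_isUnit {v : Module.End K (ℕ →₀ K)} (hv : IsUnit v) (f : Module.End K (ℕ →₀ K)) :
    ind (v * f) = ind f := by
  let e := LinearEquiv.ofBijective v ((Module.End.isUnit_iff v).1 hv)
  have hker : ker (v * f) = ker f := LinearEquiv.ker_comp e f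
  have hrange : (range f).map (e : Module.End K (ℕ →₀ K)) = range (v * f) := (range_comp f v).symm
  rw [ind, ind, hker, (Submodule.Quotient.equiv _ _ e hrange).finrank_eq]

theorem ind_one_add_of_finRank {s : Module.End K (ℕ →₀ K)} (hs : FinRank s) : ind (1 + s) = 0 :=
  have : FiniteDimensional K (range s) := hs
  ind_eq_zero_iff.2 (finrank_ker_one_add_eq_finrank_quotient_range s)

/-- A Fredholm matrix `A ∈ B(K)` has index `0` if and only if `A = V + T` for
some invertible `V ∈ B(K)` and some `T ∈ M_∞(K)`. -/
theorem index_zero_iff_invertible_plus_finite_rank {K : Type*} [Field K] (A : RCFM K)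
    (hA : IsUnit (quotMap K A)) :
    ind (A : Module.End K (ℕ →₀ K)) = 0 ↔
      ∃ V T : RCFM K, IsUnit V ∧ T ∈ Minf K ∧ A = V + T := by
  constructor
  · intro hind
    obtain ⟨B, hBA, hAB⟩ := TwoSidedIdeal.exists_one_sub_mul_mem_of_isUnit hA
    have : FiniteDimensional K (range (1 - B * A : RCFM K).val) := mem_Minf.1 hBA
    have : FiniteDimensional K (ker A.val) :=
      Submodule.finiteDimensional_of_le (ker_le_range_one_sub_mul A.val B.val)
    have : FiniteDimensional K (range (1 - A * B : RCFM K).val) := mem_Minf.1 hAB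
    have := finiteDimensional_quotient_range_of_one_sub_mul A.val B.val
    obtain ⟨m, hm⟩ := exists_disjoint_tailSubmodule (ker A.val)
    obtain ⟨W, hmW, hW⟩ := hm.symm.exists_isCompl
    obtain ⟨f, hf, hWf, hbij⟩ :=
      exists_finiteDimensional_range_bijective_add hW.symm (ind_eq_zero_iff.1 hind)
    let F : RCFM K := ⟨f, mem_RCFM_of_tailSubmodule_le_ker (hmW.trans hWf)⟩
    have hF : F ∈ Minf K := mem_Minf.2 hf
    have hπ : quotMap K (A + F) = quotMap K A :=
      (Minf K).mk'_eq_mk'_iff_sub_mem.2 (by rwa [add_sub_cancel_left])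
    exact ⟨A + F, -F, isUnit_of_bijective_of_isUnit_quotMap hbij (hπ ▸ hA), (Minf K).neg_mem hF,
      by abel⟩
  · rintro ⟨V, T, hV, hT, rfl⟩
    have hVu : IsUnit V.val := hV.map (RCFM K).val
    have hfac : (V + T).val = V.val * (1 + ↑hVu.unit⁻¹ * T.val) := by
      rw [mul_add, mul_one, ← mul_assoc, hVu.mul_val_inv, one_mul]; rfl
    rw [hfac, ind_mul_of_isUnit hVu, ind_one_add_of_finRank (finrank_mul_left _ (mem_Minf.1 hT))]
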